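/- Let 𝔏 be a Lie conformal algebra over a field k of characteristic zero, generated by a subset 𝒢 with weight function wt : 𝒢 → ℕ, with filtrations 𝔏'_i and 𝔏_i, and assume there is r ∈ ℕ such that every monomial in 𝒢 of weight ≥ r is zero. Let 𝔗 = span_k{ D^m a : m ∈ ℕ, a ∈ 𝔏_r }. For each 0 ≤ i ≤ r−1 let 𝓑_i ⊆ 𝔏_i be a subset whose image in 𝔏_i/(𝔏_{i+1} + D𝔏_{i+1}) is a k-basis, and set 𝓑 = 𝓑_0 ∪ ⋯ ∪ 𝓑_{r−1}. Then: (1) the images of the elements D^n b (n ∈ ℕ, b ∈ 𝓑) form a k-basis of 𝔏/𝔗; (2) every a ∈ 𝔏_i admits an expansion a = Σ k_{n,b}·D^n b + a₀ with k_{n,b} ∈ k, a₀ ∈ 𝔗, such that whenever k_{n,b} ≠ 0 one has D^n b ∈ 𝔏_i (i.e., b ∈ 𝓑_j with j − n ≥ i). -/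

import Mathlib

open Finset

/-- A (bundled) conformal algebra over a field `𝕜`. -/
structure ConfAlg (𝕜 : Type) [Field 𝕜] where
  A : Type
  [ag : AddCommGroup A]
  [mo : Module 𝕜 A]
  mul : ℕ → A →ₗ[𝕜] A →ₗ[𝕜] A
  D : A →ₗ[𝕜] A
  dmul_zero : ∀ a b : A, mul 0 (D a) b = 0
  dmul_succ : ∀ (n : ℕ) (a b : A), mul (n + 1) (D a) b = (-(n + 1 : 𝕜)) • mul n a b
  leibniz : ∀ (n : ℕ) (a b : A), D (mul n a b) = mul n (D a) b + mul n a (D b)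
  loc : ∀ a b : A, ∃ N : ℕ, ∀ n : ℕ, N ≤ n → mul n a b = 0

attribute [instance] ConfAlg.ag ConfAlg.mo

variable {𝕜 : Type} [Field 𝕜]

/-- Divided power of the derivation: `D^{(s)} = D^s / s!`. -/
noncomputable def ConfAlg.dpow (C : ConfAlg 𝕜) (s : ℕ) (a : C.A) : C.A :=
  (s.factorial : 𝕜)⁻¹ • (C.D ^ s) a

/-- Conformal associativity. -/
def ConfAlg.IsAssoc (C : ConfAlg 𝕜) : Prop :=
  ∀ (a b c : C.A) (m n : ℕ),
    C.mul n (C.mul m a b) c =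
      ∑ s ∈ Finset.range (m + 1), ((-1 : 𝕜) ^ s * (m.choose s : 𝕜)) •
        C.mul (m - s) a (C.mul (n + s) b c)

/-- Conformal Jacobi identity together with quasi-symmetry. -/
def ConfAlg.IsLie (C : ConfAlg 𝕜) : Prop :=
  (∀ (a b c : C.A) (m n : ℕ),
    C.mul n (C.mul m a b) c =
      ∑ s ∈ Finset.range (m + 1), ((-1 : 𝕜) ^ s * (m.choose s : 𝕜)) •
        (C.mul (m - s) a (C.mul (n + s) b c) - C.mul (n + s) b (C.mul (m - s) a c))) ∧
  (∀ (a b : C.A) (n N : ℕ), (∀ s : ℕ, N ≤ s → C.mul (n + s) b a = 0) →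
    C.mul n a b =
      -∑ s ∈ Finset.range N, ((-1 : 𝕜) ^ (s + n)) • C.dpow s (C.mul (n + s) b a))

/-- Monomials in a family `f` with weights `wt`; `IsMon C f wt w v` means `w`
is a monomial (arbitrary placement of parentheses) of weight `v`. -/
inductive ConfAlg.IsMon (C : ConfAlg 𝕜) {I : Type} (f : I → C.A) (wt : I → ℕ) : C.A → ℕ → Prop
  | base (i : I) : ConfAlg.IsMon C f wt (f i) (wt i)
  | mul (n : ℕ) {a b : C.A} {wa wb : ℕ} :
      ConfAlg.IsMon C f wt a wa → ConfAlg.IsMon C f wt b wb →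
      ConfAlg.IsMon C f wt (C.mul n a b) (wa + wb + n)

/-- `G` generates `C`. -/
def ConfAlg.Generates (C : ConfAlg 𝕜) (G : Set C.A) : Prop :=
  ∀ p : Submodule 𝕜 C.A, G ⊆ ↑p → (∀ a ∈ p, C.D a ∈ p) →
    (∀ (n : ℕ) (a b : C.A), a ∈ p → b ∈ p → C.mul n a b ∈ p) → ∀ x : C.A, x ∈ p

/-- The filtration `𝔏'_i`. -/
def ConfAlg.Lp (C : ConfAlg 𝕜) {I : Type} (f : I → C.A) (wt : I → ℕ) (i : ℤ) :
    Submodule 𝕜 C.A :=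
  Submodule.span 𝕜 {x : C.A | ∃ (m : ℕ) (w : C.A) (v : ℕ),
    C.IsMon f wt w v ∧ x = (C.D ^ m) w ∧ i + m ≤ (v : ℤ)}

/-- The filtration `𝔏_i`. -/
def ConfAlg.Lf (C : ConfAlg 𝕜) {I : Type} (f : I → C.A) (wt : I → ℕ) (i : ℤ) : Set C.A :=
  {a : C.A | ∃ n : ℕ, (C.D ^ n) a ∈ C.Lp f wt (i - n)}

/-!
Every element of `𝔗` has the form `a + D s` with `a ∈ 𝔏_r` and `s ∈ 𝔗`, and `D a ∈ 𝔏_i` forces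
`a ∈ 𝔏_{i+1}`. Hence `D` is injective modulo `𝔗`, and if `y ∈ 𝔏_j` with `j < r` satisfies
`y + D z ∈ 𝔗`, then `y ∈ 𝔏_{j+1} + D 𝔏_{j+1}`.

Independence: in a relation `∑ k_{n,b} D^n b ∈ 𝔗`, let `y` be the part with `n = 0` and `j` the
least level of a basis element occurring in `y`. The terms of `y` outside `𝓑_j` lie in `𝔏_{j+1}`,
so the `𝓑_j`-part of `y` vanishes in `𝔏_j/(𝔏_{j+1} + D 𝔏_{j+1})` and is therefore zero.
Then `y = 0`, one `D` can be cancelled modulo `𝔗`, and induction on the largest `n` finishes.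

Expansions: for `0 ≤ i` by downward induction from `i = r`, writing `a ∈ 𝔏_i` as a combination of
`𝓑_i` plus elements of `𝔏_{i+1}` and `D 𝔏_{i+1}`; for `i < 0` because `𝔏_i ⊆ 𝔏'_i + 𝔏_0`. Since the
`D^m w` with `w` a monomial span a `D`-stable subspace closed under all products, they span `𝔏`,
and each of them lies in some `𝔏'_i`.
-/

theorem exists_sub_linearCombination_mem_of_mem_span_image_sup {R M ι : Type*} [Ring R]
    [AddCommGroup M] [Module R M] {v : ι → M} {s : Set ι} {T : Submodule R M} {a : M}
    (ha : a ∈ Submodule.span R (v '' s) ⊔ T) :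
    ∃ c : ι →₀ R, ↑c.support ⊆ s ∧ a - Finsupp.linearCombination R v c ∈ T := by
  obtain ⟨_, hy, t, ht, rfl⟩ := Submodule.mem_sup.1 ha
  obtain ⟨c, hc, rfl⟩ := (Finsupp.mem_span_image_iff_linearCombination R).1 hy
  exact ⟨c, (Finsupp.mem_supported R c).1 hc, by simpa using ht⟩

namespace ConfAlg

variable {C : ConfAlg 𝕜} {I : Type} {f : I → C.A} {wt : I → ℕ}

lemma Lp_antitone : Antitone (C.Lp f wt) := fun _ _ hij =>
  Submodule.span_mono fun _ ⟨m, w, v, hw, hx, hv⟩ => ⟨m, w, v, hw, hx, by omega⟩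

lemma pow_D_mem_Lp {i : ℤ} (k : ℕ) {x : C.A} (hx : x ∈ C.Lp f wt i) :
    (C.D ^ k) x ∈ C.Lp f wt (i - k) := by
  have : (C.Lp f wt i).map (C.D ^ k) ≤ C.Lp f wt (i - k) := by
    rw [Lp, Submodule.map_span, Submodule.span_le]
    rintro _ ⟨_, ⟨m, w, v, hw, rfl, hv⟩, rfl⟩
    exact Submodule.subset_span
      ⟨k + m, w, v, hw, by rw [pow_add, Module.End.mul_apply], by push_cast; omega⟩
  exact this ⟨x, hx, rfl⟩

lemma Lp_sub_le_map_sup (i : ℤ) (n : ℕ) :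
    C.Lp f wt (i - n) ≤ (C.Lp f wt i).map (C.D ^ n) ⊔ C.Lp f wt (-n) := by
  refine Submodule.span_le.2 ?_
  rintro _ ⟨m, w, v, hw, rfl, hv⟩
  obtain hnm | hmn := le_or_gt n m
  · refine Submodule.mem_sup_left
      ⟨(C.D ^ (m - n)) w, Submodule.subset_span ⟨m - n, w, v, hw, rfl, by omega⟩, ?_⟩
    rw [← Module.End.mul_apply, ← pow_add, Nat.add_sub_cancel' hnm]
  · exact Submodule.mem_sup_right (Submodule.subset_span ⟨m, w, v, hw, rfl, by omega⟩)

variable (C f wt) in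
def filtration (i : ℤ) : Submodule 𝕜 C.A where
  carrier := C.Lf f wt i
  zero_mem' := ⟨0, by simp⟩
  add_mem' := by
    rintro a b ⟨n, ha⟩ ⟨m, hb⟩
    refine ⟨m + n, ?_⟩
    rw [map_add]
    refine add_mem ?_ ?_
    · rw [pow_add, Module.End.mul_apply]
      exact Lp_antitone (by push_cast; omega) (pow_D_mem_Lp m ha)
    · rw [add_comm, pow_add, Module.End.mul_apply]
      exact Lp_antitone (by push_cast; omega) (pow_D_mem_Lp n hb)
  smul_mem' := by
    rintro t a ⟨n, ha⟩
    exact ⟨n, by rw [map_smul]; exact Submodule.smul_mem _ t ha⟩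

lemma span_Lf (i : ℤ) : Submodule.span 𝕜 (C.Lf f wt i) = C.filtration f wt i :=
  Submodule.span_eq (C.filtration f wt i)

lemma filtration_antitone : Antitone (C.filtration f wt) := fun _ _ hij _ ⟨n, ha⟩ =>
  ⟨n, Lp_antitone (by omega) ha⟩

lemma Lp_le_filtration (i : ℤ) : C.Lp f wt i ≤ C.filtration f wt i := fun _ hx =>
  ⟨0, by simpa using hx⟩

lemma D_mem_filtration {i : ℤ} {x : C.A} (hx : x ∈ C.filtration f wt (i + 1)) :
    C.D x ∈ C.filtration f wt i := by
  obtain ⟨n, hn⟩ := hx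
  refine ⟨n, ?_⟩
  have := pow_D_mem_Lp 1 hn
  rw [← Module.End.mul_apply, ← pow_add] at this
  rw [← Module.End.mul_apply, ← pow_succ, add_comm]
  exact Lp_antitone (by omega) this

lemma mem_filtration_of_D_mem {i : ℤ} {x : C.A} (hx : C.D x ∈ C.filtration f wt i) :
    x ∈ C.filtration f wt (i + 1) := by
  obtain ⟨n, hn⟩ := hx
  exact ⟨n + 1, by rw [pow_succ, Module.End.mul_apply]; exact Lp_antitone (by push_cast; omega) hn⟩

lemma filtration_le_Lp_sup (i : ℤ) :
    C.filtration f wt i ≤ C.Lp f wt i ⊔ C.filtration f wt 0 := by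
  rintro a ⟨n, hn⟩
  obtain ⟨_, ⟨a', ha', rfl⟩, ρ, hρ, hsum⟩ := Submodule.mem_sup.1 (Lp_sub_le_map_sup i n hn)
  have : a - a' ∈ C.filtration f wt 0 :=
    ⟨n, by rwa [map_sub, ← hsum, add_sub_cancel_left, zero_sub]⟩
  simpa using Submodule.add_mem_sup ha' this

variable (C) in
def Dspan (S : Set C.A) : Submodule 𝕜 C.A :=
  Submodule.span 𝕜 {x : C.A | ∃ (m : ℕ) (a : C.A), a ∈ S ∧ x = (C.D ^ m) a}

lemma subset_Dspan {S : Set C.A} : S ⊆ C.Dspan S := fun a ha =>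
  Submodule.subset_span ⟨0, a, ha, by simp⟩

lemma map_D_Dspan_le (S : Set C.A) : (C.Dspan S).map C.D ≤ C.Dspan S := by
  rw [Dspan, Submodule.map_span, Submodule.span_le]
  rintro _ ⟨_, ⟨m, a, ha, rfl⟩, rfl⟩
  exact Submodule.subset_span ⟨m + 1, a, ha, by rw [pow_succ', Module.End.mul_apply]⟩

lemma exists_eq_add_D_of_mem_Dspan {S : Set C.A} {t : C.A} (ht : t ∈ C.Dspan S) :
    ∃ a ∈ Submodule.span 𝕜 S, ∃ s ∈ C.Dspan S, t = a + C.D s := by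
  suffices C.Dspan S ≤ Submodule.span 𝕜 S ⊔ (C.Dspan S).map C.D by
    obtain ⟨a, ha, _, ⟨s, hs, rfl⟩, rfl⟩ := Submodule.mem_sup.1 (this ht)
    exact ⟨a, ha, s, hs, rfl⟩
  refine Submodule.span_le.2 ?_
  rintro _ ⟨_ | m, a, ha, rfl⟩
  · simpa using Submodule.mem_sup_left (Submodule.subset_span ha)
  · refine Submodule.mem_sup_right ⟨(C.D ^ m) a, Submodule.subset_span ⟨m, a, ha, rfl⟩, ?_⟩
    rw [pow_succ', Module.End.mul_apply]

lemma mem_Dspan_Lf_of_D_mem {r : ℤ} {z : C.A} (h : C.D z ∈ C.Dspan (C.Lf f wt r)) :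
    z ∈ C.Dspan (C.Lf f wt r) := by
  obtain ⟨a, ha, s, hs, hzs⟩ := exists_eq_add_D_of_mem_Dspan h
  rw [span_Lf] at ha
  have hD : C.D (z - s) ∈ C.filtration f wt r := by rwa [map_sub, hzs, add_sub_cancel_right]
  have hzs' : z - s ∈ C.Dspan (C.Lf f wt r) :=
    subset_Dspan (filtration_antitone (by omega) (mem_filtration_of_D_mem hD))
  simpa using add_mem hzs' hs

lemma mem_sup_map_D_of_add_D_mem {j r : ℤ} (hjr : j < r) {y z : C.A}
    (hy : y ∈ C.filtration f wt j) (h : y + C.D z ∈ C.Dspan (C.Lf f wt r)) :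
    y ∈ C.filtration f wt (j + 1) ⊔ (C.filtration f wt (j + 1)).map C.D := by
  obtain ⟨a, ha, s, -, hyz⟩ := exists_eq_add_D_of_mem_Dspan h
  rw [span_Lf] at ha
  have ha' : a ∈ C.filtration f wt (j + 1) := filtration_antitone (by omega) ha
  have hys : y = a + C.D (s - z) := by rw [map_sub, add_sub, ← hyz, add_sub_cancel_right]
  have hD : C.D (s - z) ∈ C.filtration f wt j := by
    rw [show C.D (s - z) = y - a by rw [hys, add_sub_cancel_left]]
    exact sub_mem hy (filtration_antitone (by omega) ha)
  rw [hys]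
  exact Submodule.add_mem_sup ha' ⟨s - z, mem_filtration_of_D_mem hD, rfl⟩

lemma mul_pow_D_left_mem {p : Submodule 𝕜 C.A} {a b : C.A} (h : ∀ n, C.mul n a b ∈ p)
    (m n : ℕ) : C.mul n ((C.D ^ m) a) b ∈ p := by
  induction m generalizing n with
  | zero => simpa using h n
  | succ m ih =>
    rw [pow_succ', Module.End.mul_apply]
    cases n with
    | zero => rw [C.dmul_zero]; exact p.zero_mem
    | succ n => rw [C.dmul_succ]; exact p.smul_mem _ (ih n)

lemma mul_pow_D_right_mem {p : Submodule 𝕜 C.A} (hp : p.map C.D ≤ p) {a b : C.A}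
    (h : ∀ n, C.mul n a b ∈ p) (k n : ℕ) : C.mul n a ((C.D ^ k) b) ∈ p := by
  induction k generalizing a n with
  | zero => simpa using h n
  | succ k ih =>
    rw [pow_succ', Module.End.mul_apply, eq_sub_of_add_eq' (C.leibniz n a _).symm]
    refine sub_mem (hp (Submodule.mem_map_of_mem (ih h n))) (ih (fun n => ?_) n)
    simpa using mul_pow_D_left_mem h 1 n

variable (C f wt) in
def monomials : Set C.A := {w | ∃ v, C.IsMon f wt w v}

lemma mul_mem_Dspan_monomials (n : ℕ) {x y : C.A} (hx : x ∈ C.Dspan (C.monomials f wt))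
    (hy : y ∈ C.Dspan (C.monomials f wt)) : C.mul n x y ∈ C.Dspan (C.monomials f wt) := by
  suffices Submodule.map₂ (C.mul n) (C.Dspan (C.monomials f wt)) (C.Dspan (C.monomials f wt)) ≤
      C.Dspan (C.monomials f wt) from this (Submodule.apply_mem_map₂ _ hx hy)
  rw [Dspan, Submodule.map₂_span_span, Submodule.span_le]
  rintro _ ⟨_, ⟨m, w, ⟨v, hw⟩, rfl⟩, _, ⟨k, w', ⟨v', hw'⟩, rfl⟩, rfl⟩
  refine mul_pow_D_right_mem (map_D_Dspan_le _) (mul_pow_D_left_mem (fun n => ?_) m) k n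
  exact subset_Dspan ⟨_, hw.mul n hw'⟩

lemma Dspan_monomials_eq_top (hgen : C.Generates (Set.range f)) :
    C.Dspan (C.monomials f wt) = ⊤ := by
  refine eq_top_iff.2 fun x _ => hgen _ ?_
    (fun _ ha => map_D_Dspan_le _ (Submodule.mem_map_of_mem ha))
    (fun n _ _ ha hb => mul_mem_Dspan_monomials n ha hb) x
  rintro _ ⟨i, rfl⟩
  exact subset_Dspan ⟨_, IsMon.base i⟩

variable (C) in
def derivTerm (p : ℕ × C.A) : C.A := (C.D ^ p.1) p.2

lemma derivTerm_succ (n : ℕ) (b : C.A) : C.derivTerm (n + 1, b) = C.D (C.derivTerm (n, b)) := by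
  rw [derivTerm, pow_succ', Module.End.mul_apply, derivTerm]

variable (C f wt) in
/-- The elements admitting an expansion as in part (2) at level `i`. -/
def expSpan (B : Set C.A) (r : ℕ) (i : ℤ) : Submodule 𝕜 C.A :=
  Submodule.span 𝕜 (C.derivTerm '' {p | p.2 ∈ B ∧ C.derivTerm p ∈ C.Lf f wt i}) ⊔
    C.Dspan (C.Lf f wt r)

section Basis

variable {r : ℕ} {B : Set C.A} {Bs : ℕ → Set C.A}
  (hBsub : ∀ i < r, Bs i ⊆ C.Lf f wt i)
  (hBspan : ∀ i < r, ∀ a ∈ C.Lf f wt i, ∃ c : C.A →₀ 𝕜, ↑c.support ⊆ Bs i ∧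
    a - (c.sum fun b t => t • b) ∈ C.filtration f wt (i + 1) ⊔ (C.filtration f wt (i + 1)).map C.D)
  (hBind : ∀ i < r, ∀ c : C.A →₀ 𝕜, ↑c.support ⊆ Bs i →
    (c.sum fun b t => t • b) ∈ C.filtration f wt (i + 1) ⊔ (C.filtration f wt (i + 1)).map C.D →
      c = 0)
  (hBs : ∀ i < r, Bs i ⊆ B) (hB : ∀ b ∈ B, ∃ i < r, b ∈ Bs i)

lemma expSpan_antitone : Antitone (C.expSpan f wt B r) := by
  intro i j hij
  refine sup_le_sup_right (Submodule.span_mono (Set.image_mono ?_)) _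
  exact fun p hp => ⟨hp.1, filtration_antitone hij hp.2⟩

lemma map_D_expSpan_le (i : ℤ) : (C.expSpan f wt B r (i + 1)).map C.D ≤ C.expSpan f wt B r i := by
  rw [expSpan, Submodule.map_sup, Submodule.map_span]
  refine sup_le_sup (Submodule.span_mono ?_) (map_D_Dspan_le _)
  rintro _ ⟨_, ⟨⟨n, b⟩, hp, rfl⟩, rfl⟩
  exact ⟨(n + 1, b), ⟨hp.1, by rw [derivTerm_succ]; exact D_mem_filtration hp.2⟩,
    derivTerm_succ n b⟩

lemma pow_D_mem_expSpan {i : ℤ} (m : ℕ) {x : C.A} (hx : x ∈ C.expSpan f wt B r i) :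
    (C.D ^ m) x ∈ C.expSpan f wt B r (i - m) := by
  induction m with
  | zero => simpa using hx
  | succ m ih =>
    rw [pow_succ', Module.End.mul_apply]
    refine map_D_expSpan_le _ (Submodule.mem_map_of_mem ?_)
    rwa [Nat.cast_succ, sub_add_eq_sub_sub, sub_add_cancel]

include hBsub hBspan hBs in
theorem filtration_natCast_le_expSpan (i : ℕ) : C.filtration f wt i ≤ C.expSpan f wt B r i := by
  intro a ha
  by_cases hri : r ≤ i
  · exact Submodule.mem_sup_right (subset_Dspan (filtration_antitone (by exact_mod_cast hri) ha))
  obtain ⟨c, hc, hrest⟩ := hBspan i (by omega) a ha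
  obtain ⟨v, hv, _, ⟨w, hw, rfl⟩, hvw⟩ := Submodule.mem_sup.1 hrest
  have IH := filtration_natCast_le_expSpan (i + 1)
  push_cast at IH
  rw [← sub_add_cancel a (c.sum _), ← hvw]
  refine add_mem
    (add_mem (expSpan_antitone (by omega) (IH hv)) (map_D_expSpan_le _ ⟨w, IH hw, rfl⟩))
    (Submodule.mem_sup_left (Submodule.finsuppSum_mem 𝕜 _ _ _ fun b hb => ?_))
  have hbi : b ∈ Bs i := hc (Finsupp.mem_support_iff.2 hb)
  refine Submodule.smul_mem _ _ (Submodule.subset_span ⟨(0, b), ⟨hBs i (by omega) hbi, ?_⟩, ?_⟩)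
  · simpa [derivTerm] using hBsub i (by omega) hbi
  · simp [derivTerm]
termination_by r - i

include hBsub hBspan hBs in
lemma Lp_le_expSpan (i : ℤ) : C.Lp f wt i ≤ C.expSpan f wt B r i := by
  refine Submodule.span_le.2 ?_
  rintro _ ⟨m, w, v, hw, rfl, hv⟩
  have hwv : w ∈ C.filtration f wt v :=
    Lp_le_filtration _ (Submodule.subset_span ⟨0, w, v, hw, by simp, by simp⟩)
  exact expSpan_antitone (by omega)
    (pow_D_mem_expSpan m (filtration_natCast_le_expSpan hBsub hBspan hBs v hwv))

include hBsub hBspan hBs in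
theorem filtration_le_expSpan (i : ℤ) : C.filtration f wt i ≤ C.expSpan f wt B r i := by
  rcases le_or_gt 0 i with hi | hi
  · lift i to ℕ using hi
    exact filtration_natCast_le_expSpan hBsub hBspan hBs i
  calc C.filtration f wt i ≤ C.Lp f wt i ⊔ C.filtration f wt 0 := filtration_le_Lp_sup i
    _ ≤ C.expSpan f wt B r i ⊔ C.expSpan f wt B r 0 :=
      sup_le_sup (Lp_le_expSpan hBsub hBspan hBs i)
        (by exact_mod_cast filtration_natCast_le_expSpan hBsub hBspan hBs 0)
    _ = C.expSpan f wt B r i := sup_eq_left.2 (expSpan_antitone hi.le)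

include hBsub hBspan hBs in
theorem span_derivTerm_sup_Dspan_eq_top (hgen : C.Generates (Set.range f)) :
    Submodule.span 𝕜 (C.derivTerm '' {p | p.2 ∈ B}) ⊔ C.Dspan (C.Lf f wt r) = ⊤ := by
  rw [eq_top_iff, ← Dspan_monomials_eq_top hgen, Dspan, Submodule.span_le]
  rintro _ ⟨m, w, ⟨v, hw⟩, rfl⟩
  have hmem : (C.D ^ m) w ∈ C.expSpan f wt B r (v - m) :=
    Lp_le_expSpan hBsub hBspan hBs _ (Submodule.subset_span ⟨m, w, v, hw, rfl, by omega⟩)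
  have hle : C.expSpan f wt B r (v - m) ≤
      Submodule.span 𝕜 (C.derivTerm '' {p | p.2 ∈ B}) ⊔ C.Dspan (C.Lf f wt r) :=
    sup_le_sup_right (Submodule.span_mono (Set.image_mono fun _ hp => hp.1)) _
  exact hle hmem

include hBsub hBind hB in
theorem eq_zero_of_sum_add_D_mem_Dspan {c : C.A →₀ 𝕜} (hc : ↑c.support ⊆ B) {z : C.A}
    (h : (c.sum fun b t => t • b) + C.D z ∈ C.Dspan (C.Lf f wt r)) : c = 0 := by
  classical
  by_contra hc0
  have hex : ∃ j, ∃ b ∈ c.support, j < r ∧ b ∈ Bs j := by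
    obtain ⟨b, hb⟩ := Finsupp.support_nonempty_iff.2 hc0
    obtain ⟨j, hj, hbj⟩ := hB b (hc hb)
    exact ⟨j, b, hb, hj, hbj⟩
  obtain ⟨b₀, hb₀, hjr, hb₀j⟩ := Nat.find_spec hex
  set j := Nat.find hex
  have hhigher : ∀ b ∈ c.support, b ∉ Bs j → b ∈ C.filtration f wt (j + 1) := by
    intro b hb hbj
    obtain ⟨i, hi, hbi⟩ := hB b (hc hb)
    have hji : j < i :=
      lt_of_le_of_ne (Nat.find_min' hex ⟨b, hb, hi, hbi⟩) (by rintro rfl; exact hbj hbi)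
    exact filtration_antitone (by exact_mod_cast hji) (hBsub i hi hbi)
  have hy : (c.sum fun b t => t • b) ∈ C.filtration f wt j := by
    refine Submodule.finsuppSum_mem 𝕜 _ _ _ fun b hb => Submodule.smul_mem _ _ ?_
    by_cases hbj : b ∈ Bs j
    · exact hBsub j hjr hbj
    · exact filtration_antitone (by omega) (hhigher b (Finsupp.mem_support_iff.2 hb) hbj)
  have hsplit := mem_sup_map_D_of_add_D_mem (by exact_mod_cast hjr) hy h
  have hfilter : c.filter (· ∈ Bs j) = 0 := by
    refine hBind j hjr _ (fun b hb => (Finset.mem_filter.1 hb).2) ?_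
    rw [eq_sub_of_add_eq (Finsupp.sum_filter_add_sum_filter_not (· ∈ Bs j) c fun b t => t • b)]
    refine sub_mem hsplit (Submodule.mem_sup_left (Submodule.finsuppSum_mem 𝕜 _ _ _ fun b hb => ?_))
    obtain ⟨hbc, hbj⟩ := Finset.mem_filter.1 (Finsupp.mem_support_iff.2 hb)
    exact Submodule.smul_mem _ _ (hhigher b hbc hbj)
  have := Finsupp.filter_apply_pos (· ∈ Bs j) c hb₀j
  rw [hfilter] at this
  exact Finsupp.mem_support_iff.1 hb₀ this.symm

include hBsub hBind hB in
theorem eq_zero_of_sum_range_mem_Dspan : ∀ (N : ℕ) (g : ℕ → C.A →₀ 𝕜),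
    (∀ n, ↑(g n).support ⊆ B) →
    (∑ n ∈ Finset.range N, (C.D ^ n) ((g n).sum fun b t => t • b)) ∈ C.Dspan (C.Lf f wt r) →
      ∀ n < N, g n = 0
  | 0, _, _, _ => by simp
  | N + 1, g, hg, h => by
    simp only [Finset.sum_range_succ', pow_succ', Module.End.mul_apply, ← map_sum, pow_zero,
      Module.End.one_apply] at h
    have hg0 : g 0 = 0 := eq_zero_of_sum_add_D_mem_Dspan hBsub hBind hB (hg 0) (by rwa [add_comm])
    rw [hg0, Finsupp.sum_zero_index, add_zero] at h
    have hgsucc := eq_zero_of_sum_range_mem_Dspan N (fun n => g (n + 1)) (fun n => hg _)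
      (mem_Dspan_Lf_of_D_mem h)
    rintro (_ | n) hn
    · exact hg0
    · exact hgsucc n (by omega)

include hBsub hBind hB in
theorem eq_zero_of_sum_pow_D_mem_Dspan {c : ℕ × C.A →₀ 𝕜} (hc : ∀ p ∈ c.support, p.2 ∈ B)
    (h : (c.sum fun p t => t • (C.D ^ p.1) p.2) ∈ C.Dspan (C.Lf f wt r)) : c = 0 := by
  obtain ⟨N, hN⟩ := Finset.exists_nat_subset_range c.curry.support
  have hsum : (c.sum fun p t => t • (C.D ^ p.1) p.2) =
      ∑ n ∈ Finset.range N, (C.D ^ n) ((c.curry n).sum fun b t => t • b) := by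
    rw [← Finsupp.sum_curry_index c fun n b t => t • (C.D ^ n) b,
      Finsupp.sum_of_support_subset _ hN]
    · simp [map_finsuppSum]
    · simp
  have hzero := eq_zero_of_sum_range_mem_Dspan hBsub hBind hB N c.curry
    (fun n b hb => hc (n, b) (by simpa using hb)) (hsum ▸ h)
  ext ⟨n, b⟩
  rw [← Finsupp.curry_apply]
  by_cases hn : n < N
  · simp [hzero n hn]
  · rw [Finsupp.notMem_support_iff.1 fun hn' => hn (Finset.mem_range.1 (hN hn'))]
    rfl

end Basis

end ConfAlg

theorem basis_of_L_mod_T_general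
    (C : ConfAlg 𝕜) (G : Set C.A) (wt : ↥G → ℕ)
    (hgen : C.Generates G) (r : ℕ)
    (T : Submodule 𝕜 C.A)
    (hT : T = Submodule.span 𝕜 {x : C.A | ∃ (m : ℕ) (a : C.A),
      a ∈ C.Lf (Subtype.val : ↥G → C.A) wt (r : ℤ) ∧ x = (C.D ^ m) a})
    (LfS : ℤ → Submodule 𝕜 C.A)
    (hLfS : ∀ i : ℤ, LfS i = Submodule.span 𝕜 (C.Lf (Subtype.val : ↥G → C.A) wt i))
    (Bs : ℕ → Set C.A)
    (hBsub : ∀ i : ℕ, i < r → Bs i ⊆ C.Lf (Subtype.val : ↥G → C.A) wt (i : ℤ))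
    (hBind : ∀ i : ℕ, i < r → ∀ c : C.A →₀ 𝕜, (↑c.support : Set C.A) ⊆ Bs i →
      (c.sum fun b t => t • b) ∈ LfS ((i : ℤ) + 1) ⊔ (LfS ((i : ℤ) + 1)).map C.D → c = 0)
    (hBspan : ∀ i : ℕ, i < r → ∀ a ∈ C.Lf (Subtype.val : ↥G → C.A) wt (i : ℤ),
      ∃ c : C.A →₀ 𝕜, (↑c.support : Set C.A) ⊆ Bs i ∧
        a - (c.sum fun b t => t • b) ∈ LfS ((i : ℤ) + 1) ⊔ (LfS ((i : ℤ) + 1)).map C.D)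
    (B : Set C.A) (hB : B = ⋃ i ∈ Set.Iio r, Bs i) :
    ((∀ c : (ℕ × C.A) →₀ 𝕜, (∀ p ∈ c.support, p.2 ∈ B) →
        (c.sum fun p t => t • (C.D ^ p.1) p.2) ∈ T → c = 0) ∧
      (∀ a : C.A, ∃ c : (ℕ × C.A) →₀ 𝕜, (∀ p ∈ c.support, p.2 ∈ B) ∧
        a - (c.sum fun p t => t • (C.D ^ p.1) p.2) ∈ T)) ∧
    (∀ (i : ℤ) (a : C.A), a ∈ C.Lf (Subtype.val : ↥G → C.A) wt i →
      ∃ c : (ℕ × C.A) →₀ 𝕜, (∀ p ∈ c.support, p.2 ∈ B) ∧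
        (∀ p ∈ c.support, (C.D ^ p.1) p.2 ∈ C.Lf (Subtype.val : ↥G → C.A) wt i) ∧
        a - (c.sum fun p t => t • (C.D ^ p.1) p.2) ∈ T) := by
  obtain rfl : LfS = C.filtration Subtype.val wt :=
    funext fun i => (hLfS i).trans (ConfAlg.span_Lf i)
  obtain rfl : T = C.Dspan (C.Lf Subtype.val wt r) := hT
  have hBs : ∀ i < r, Bs i ⊆ B := fun i hi => hB ▸ Set.subset_biUnion_of_mem hi
  have hBex : ∀ b ∈ B, ∃ i < r, b ∈ Bs i := by simp [hB]
  have hgen' : C.Generates (Set.range (Subtype.val : G → C.A)) := by rwa [Subtype.range_coe]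
  refine ⟨⟨fun c hc h => ConfAlg.eq_zero_of_sum_pow_D_mem_Dspan hBsub hBind hBex hc h,
    fun a => ?_⟩, fun i a ha => ?_⟩
  · obtain ⟨c, hc, hac⟩ := exists_sub_linearCombination_mem_of_mem_span_image_sup
      ((ConfAlg.span_derivTerm_sup_Dspan_eq_top hBsub hBspan hBs hgen').ge Submodule.mem_top)
    exact ⟨c, fun p hp => hc hp, hac⟩
  · obtain ⟨c, hc, hac⟩ := exists_sub_linearCombination_mem_of_mem_span_image_sup
      (ConfAlg.filtration_le_expSpan hBsub hBspan hBs i ha)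
    exact ⟨c, fun p hp => (hc hp).1, fun p hp => (hc hp).2, hac⟩

/-- With `𝔗 = span{D^m a : a ∈ 𝔏_r}` and `𝓑 = ⋃_{i<r} 𝓑_i`, where the image
of `𝓑_i` in `𝔏_i/(𝔏_{i+1} + D𝔏_{i+1})` is a basis: (1) the images of the `D^n b` (`n ∈ ℕ`,
`b ∈ 𝓑`) form a basis of `𝔏/𝔗`; (2) any `a ∈ 𝔏_i` has an expansion `a = Σ k_{n,b}·D^n b + a₀`
with `a₀ ∈ 𝔗` and `D^n b ∈ 𝔏_i` whenever `k_{n,b} ≠ 0`. -/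
theorem basis_of_L_mod_T
    [CharZero 𝕜] (C : ConfAlg 𝕜) (hLie : C.IsLie) (G : Set C.A) (wt : ↥G → ℕ)
    (hgen : C.Generates G) (r : ℕ)
    (hr : ∀ (w : C.A) (v : ℕ),
      C.IsMon (Subtype.val : ↥G → C.A) wt w v → r ≤ v → w = 0)
    (T : Submodule 𝕜 C.A)
    (hT : T = Submodule.span 𝕜 {x : C.A | ∃ (m : ℕ) (a : C.A),
      a ∈ C.Lf (Subtype.val : ↥G → C.A) wt (r : ℤ) ∧ x = (C.D ^ m) a})
    (LfS : ℤ → Submodule 𝕜 C.A)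
    (hLfS : ∀ i : ℤ, LfS i = Submodule.span 𝕜 (C.Lf (Subtype.val : ↥G → C.A) wt i))
    (Bs : ℕ → Set C.A)
    (hBsub : ∀ i : ℕ, i < r → Bs i ⊆ C.Lf (Subtype.val : ↥G → C.A) wt (i : ℤ))
    (hBind : ∀ i : ℕ, i < r → ∀ c : C.A →₀ 𝕜, (↑c.support : Set C.A) ⊆ Bs i →
      (c.sum fun b t => t • b) ∈ LfS ((i : ℤ) + 1) ⊔ (LfS ((i : ℤ) + 1)).map C.D → c = 0)
    (hBspan : ∀ i : ℕ, i < r → ∀ a ∈ C.Lf (Subtype.val : ↥G → C.A) wt (i : ℤ),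
      ∃ c : C.A →₀ 𝕜, (↑c.support : Set C.A) ⊆ Bs i ∧
        a - (c.sum fun b t => t • b) ∈ LfS ((i : ℤ) + 1) ⊔ (LfS ((i : ℤ) + 1)).map C.D)
    (B : Set C.A) (hB : B = ⋃ i ∈ Set.Iio r, Bs i) :
    ((∀ c : (ℕ × C.A) →₀ 𝕜, (∀ p ∈ c.support, p.2 ∈ B) →
        (c.sum fun p t => t • (C.D ^ p.1) p.2) ∈ T → c = 0) ∧
      (∀ a : C.A, ∃ c : (ℕ × C.A) →₀ 𝕜, (∀ p ∈ c.support, p.2 ∈ B) ∧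
        a - (c.sum fun p t => t • (C.D ^ p.1) p.2) ∈ T)) ∧
    (∀ (i : ℤ) (a : C.A), a ∈ C.Lf (Subtype.val : ↥G → C.A) wt i →
      ∃ c : (ℕ × C.A) →₀ 𝕜, (∀ p ∈ c.support, p.2 ∈ B) ∧
        (∀ p ∈ c.support, (C.D ^ p.1) p.2 ∈ C.Lf (Subtype.val : ↥G → C.A) wt i) ∧
        a - (c.sum fun p t => t • (C.D ^ p.1) p.2) ∈ T) :=
  basis_of_L_mod_T_general C G wt hgen r T hT LfS hLfS Bs hBsub hBind hBspan B hB
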